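/- arXiv:2106.15449 — 6 statements merged into one kernel-verified Lean document; each statement's English description precedes it below -/
import Mathlib

section
/- Let E ⊆ ℝⁿ be Lebesgue measurable, V a Banach space, and f : E → V* a function into the dual of V that is essentially separably valued (there is a Lebesgue-null set N ⊆ E with f(E \ N) separable). Then f is Lebesgue–Borel measurable if and only if f is weak* measurable, i.e., x ↦ ⟨v, f(x)⟩ is measurable for every v ∈ V. -/
/-!
On a separable set of functionals the operator norm is a supremum over countably many vectors
(norming vectors of a countable dense subset), so weak* measurability of `f` makes every
`x ↦ ‖f x - c‖` measurable. That suffices for a map essentially valued in the closure of a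
countable set `C`: an open set meets `closure C` in a countable union of rational balls centred
at points of `C`.
-/

open MeasureTheory Set Metric

section DistMeasurable

variable {α X : Type*} [MeasurableSpace α] [PseudoMetricSpace X] [MeasurableSpace X]
  [BorelSpace X] {f : α → X} {C : Set X}

theorem measurable_of_measurable_dist (hC : C.Countable) (hfC : ∀ x, f x ∈ closure C)
    (hd : ∀ c ∈ C, Measurable fun x => dist (f x) c) : Measurable f := by
  refine measurable_of_isOpen fun U hU => ?_
  have hpre : f ⁻¹' U = ⋃ c ∈ C, ⋃ r : ℚ, ⋃ (_ : ball c r ⊆ U), {x | dist (f x) c < r} := by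
    ext x
    simp only [mem_preimage, mem_iUnion, mem_ofPred_eq, exists_prop]
    constructor
    · intro hx
      obtain ⟨ε, hε, hball⟩ := Metric.isOpen_iff.1 hU (f x) hx
      obtain ⟨r, hr0, hrε⟩ := exists_rat_btwn (half_pos hε)
      obtain ⟨c, hc, hxc⟩ := Metric.mem_closure_iff.1 (hfC x) r (by exact_mod_cast hr0)
      refine ⟨c, hc, r, fun y hy => hball ?_, hxc⟩
      calc dist y (f x) ≤ dist y c + dist (f x) c := dist_triangle_right _ _ _
        _ < ε := by rw [mem_ball] at hy; linarith
    · rintro ⟨c, -, r, hrU, hxc⟩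
      exact hrU hxc
  rw [hpre]
  exact .biUnion hC fun c hc => .iUnion fun r => .iUnion fun _ =>
    measurableSet_lt (hd c hc) measurable_const

theorem aemeasurable_of_aemeasurable_dist {μ : Measure α} (hC : C.Countable)
    (hfC : ∀ᵐ x ∂μ, f x ∈ closure C) (hd : ∀ c ∈ C, AEMeasurable (fun x => dist (f x) c) μ) :
    AEMeasurable f μ := by
  classical
  rcases C.eq_empty_or_nonempty with rfl | ⟨c₀, hc₀⟩
  · have hμ : μ = 0 := by simpa using hfC
    exact hμ ▸ aemeasurable_zero_measure
  choose! g hg hdg using hd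
  obtain ⟨s, hsμ, hs, hsgood⟩ := (hfC.and ((ae_ball_iff hC).2 hdg)).exists_measurable_mem
  refine ⟨s.piecewise f fun _ => c₀, measurable_of_measurable_dist hC (fun x => ?_)
    (fun c hc => ?_), ?_⟩
  · by_cases hx : x ∈ s
    · simpa [hx] using (hsgood x hx).1
    · simpa [hx] using subset_closure hc₀
  · have : (fun x => dist (s.piecewise f (fun _ => c₀) x) c) =
        s.piecewise (g c) fun _ => dist c₀ c := by
      ext x
      by_cases hx : x ∈ s
      · simp [hx, (hsgood x hx).2 c hc]
      · simp [hx]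
    rw [this]
    exact (hg c hc).piecewise hs measurable_const
  · filter_upwards [hsμ] with x hx
    simp [hx]

end DistMeasurable

namespace ContinuousLinearMap

variable {𝕜 E F : Type*} [SeminormedAddCommGroup F]

theorem opNorm_eq_iSup_of_forall_lt_add [NontriviallyNormedField 𝕜] [SeminormedAddCommGroup E]
    [NormedSpace 𝕜 E] [NormedSpace 𝕜 F] (ψ : E →L[𝕜] F) {D : Set E} (hD : ∀ v ∈ D, ‖v‖ ≤ 1)
    (hψ : ∀ ε > 0, ∃ v ∈ D, ‖ψ‖ < ‖ψ v‖ + ε) : ‖ψ‖ = ⨆ v : D, ‖ψ v‖ := by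
  have hle : ∀ v : D, ‖ψ v‖ ≤ ‖ψ‖ := fun v => by simpa using ψ.le_opNorm_of_le (hD v v.2)
  refine le_antisymm (le_of_forall_pos_lt_add fun ε hε => ?_) (Real.iSup_le hle (norm_nonneg ψ))
  obtain ⟨v, hv, hψv⟩ := hψ ε hε
  exact hψv.trans_le (by gcongr; exact le_ciSup ⟨‖ψ‖, forall_mem_range.2 hle⟩ ⟨v, hv⟩)

theorem exists_countable_norming_set [DenselyNormedField 𝕜] [NormedAddCommGroup E]
    [NormedSpace 𝕜 E] [NormedSpace 𝕜 F] {T : Set (E →L[𝕜] F)}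
    (hT : TopologicalSpace.IsSeparable T) :
    ∃ D : Set E, D.Countable ∧ ∀ ψ ∈ T, ‖ψ‖ = ⨆ v : D, ‖ψ v‖ := by
  obtain ⟨C, hC, hTC⟩ := hT
  have hnorming : ∀ φ : C, ∀ k : ℕ, ∃ v : E, ‖v‖ < 1 ∧ ‖φ.1‖ - 1 / (k + 1) < ‖φ.1 v‖ :=
    fun φ k => φ.1.exists_lt_apply_of_lt_opNorm (sub_lt_self _ Nat.one_div_pos_of_nat)
  choose d hd1 hd using hnorming
  have := hC.to_subtype
  refine ⟨range fun p : C × ℕ => d p.1 p.2, countable_range _, fun ψ hψ => ?_⟩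
  refine ψ.opNorm_eq_iSup_of_forall_lt_add (forall_mem_range.2 fun p => (hd1 p.1 p.2).le)
    fun ε hε => ?_
  obtain ⟨φ, hφC, hψφ⟩ := Metric.mem_closure_iff.1 (hTC hψ) (ε / 3) (by positivity)
  obtain ⟨k, hk⟩ := exists_nat_one_div_lt (show 0 < ε / 3 by positivity)
  set v := d ⟨φ, hφC⟩ k
  rw [dist_eq_norm] at hψφ
  have hφv : ‖φ v‖ ≤ ‖ψ v‖ + ‖ψ - φ‖ :=
    calc ‖φ v‖ ≤ ‖ψ v‖ + ‖(ψ - φ) v‖ := by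
          simpa [norm_sub_rev] using norm_le_norm_add_norm_sub' (φ v) (ψ v)
      _ ≤ ‖ψ v‖ + ‖ψ - φ‖ := by
          gcongr
          simpa using (ψ - φ).le_opNorm_of_le (hd1 ⟨φ, hφC⟩ k).le
  refine ⟨v, ⟨(⟨φ, hφC⟩, k), rfl⟩, ?_⟩
  calc ‖ψ‖ ≤ ‖φ‖ + ‖ψ - φ‖ := norm_le_norm_add_norm_sub' ψ φ
    _ < ‖φ v‖ + 1 / (k + 1) + ε / 3 := by linarith [hd ⟨φ, hφC⟩ k]
    _ < ‖ψ v‖ + ε := by linarith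

end ContinuousLinearMap

theorem stmt0_general {n : ℕ} (E : Set (Fin n → ℝ)) (hE : MeasurableSet E)
    {V : Type*} [NormedAddCommGroup V] [NormedSpace ℝ V]
    (f : (Fin n → ℝ) → (V →L[ℝ] ℝ))
    (hsep : ∃ N : Set (Fin n → ℝ), volume N = 0 ∧
      TopologicalSpace.IsSeparable (f '' (E \ N))) :
    AEMeasurable f (volume.restrict E) ↔
      ∀ v : V, AEMeasurable (fun x => f x v) (volume.restrict E) := by
  refine ⟨fun hf v => hf.apply_continuousLinearMap v, fun hv => ?_⟩
  obtain ⟨N, hN, hS⟩ := hsep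
  obtain ⟨C, hCS, hC, hSC⟩ := hS.exists_countable_dense_subset
  obtain ⟨D, hD, hnorm⟩ :=
    ContinuousLinearMap.exists_countable_norming_set ((hS.prod hS).image continuous_sub)
  have := hD.to_subtype
  have hae : ∀ᵐ x ∂volume.restrict E, x ∈ E \ N :=
    (ae_restrict_mem hE).and (ae_restrict_of_ae (measure_eq_zero_iff_ae_notMem.1 hN))
  refine aemeasurable_of_aemeasurable_dist hC (hae.mono fun x hx => hSC (mem_image_of_mem f hx))
    fun c hc => ?_
  refine (AEMeasurable.iSup fun v : D => ((hv v).sub (aemeasurable_const (b := c v))).norm).congr ?_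
  filter_upwards [hae] with x hx
  rw [dist_eq_norm, hnorm _ ⟨(f x, c), ⟨mem_image_of_mem f hx, hCS hc⟩, rfl⟩]
  rfl

/-- Pettis-type theorem (Lemma 2.2): an essentially separably valued function into a dual
Banach space is (Lebesgue) measurable iff it is weak* measurable. -/
theorem stmt0 {n : ℕ} (E : Set (Fin n → ℝ)) (hE : MeasurableSet E)
    {V : Type*} [NormedAddCommGroup V] [NormedSpace ℝ V] [CompleteSpace V]
    (f : (Fin n → ℝ) → (V →L[ℝ] ℝ))
    (hsep : ∃ N : Set (Fin n → ℝ), volume N = 0 ∧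
      TopologicalSpace.IsSeparable (f '' (E \ N))) :
    AEMeasurable f (volume.restrict E) ↔
      ∀ v : V, AEMeasurable (fun x => f x v) (volume.restrict E) :=
  stmt0_general E hE f hsep
end

section
/- Let Y be a separable Banach space and γ : [a,b] → Y* a Lipschitz curve into the dual space. Then there exists a weak* measurable function γ' : [a,b] → Y* such that for almost every t ∈ [a,b] and every y ∈ Y, ⟨y, (γ(t+h) − γ(t))/h⟩ → ⟨y, γ'(t)⟩ as h → 0. -/
open MeasureTheory Set Filter Topology

/-!
Extend `γ` to a `K`-Lipschitz curve on `ℝ` by composing with the projection onto `[a, b]`.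
Fix a countable dense set `s ⊆ Y`. For each `y ∈ s` the real function `t ↦ γ t y` is Lipschitz,
hence differentiable off a null set; off the countable union `N` of these null sets, the
difference quotients of `γ` at `t` are functionals of norm `≤ K` that converge at every point
of `s`. Being equicontinuous, they then converge at every `y`, and a pointwise limit of a bounded
family of continuous linear maps is continuous linear. Off `N`, `γ' t y` is the ordinary
derivative of `t ↦ γ t y`, which makes it measurable.
-/

theorem EquicontinuousAt.cauchy_map_of_mem_closure {ι X α : Type*} [TopologicalSpace X]
    [UniformSpace α] {l : Filter ι} {F : ι → X → α} {s : Set X} {x : X}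
    (hF : EquicontinuousAt F x) (hs : ∀ y ∈ s, Cauchy (map (F · y) l))
    (hx : x ∈ closure s) : Cauchy (map (F · x) l) := by
  obtain ⟨y₀, hy₀⟩ := closure_nonempty_iff.1 ⟨x, hx⟩
  refine cauchy_map_iff.2 ⟨(cauchy_map_iff.1 (hs y₀ hy₀)).1, fun U hU => ?_⟩
  obtain ⟨V, hV, hVsymm, hVU⟩ := comp_comp_symm_mem_uniformity_sets hU
  obtain ⟨y, hFy, hys⟩ := mem_closure_iff_nhds.1 hx _ (hF V hV)
  refine mem_map.2 (mem_of_superset (mem_map.1 ((cauchy_map_iff.1 (hs y hys)).2 hV)) ?_)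
  exact fun p hp => hVU ⟨F p.2 y, ⟨F p.1 y, hFy p.1, hp⟩, SetRel.symm V (hFy p.2)⟩

section
variable {𝕜 E F : Type*} [NontriviallyNormedField 𝕜] [SeminormedAddCommGroup E]
  [NormedSpace 𝕜 E] [NormedAddCommGroup F] [NormedSpace 𝕜 F] [CompleteSpace F]

theorem ContinuousLinearMap.exists_tendsto_apply_of_dense {α : Type*} {l : Filter α} [l.NeBot]
    {g : α → E →L[𝕜] F} {C : ℝ} (hg : ∀ a, ‖g a‖ ≤ C) {s : Set E} (hs : Dense s)
    (h : ∀ y ∈ s, ∃ c, Tendsto (fun a => g a y) l (𝓝 c)) :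
    ∃ L : E →L[𝕜] F, ∀ y, Tendsto (fun a => g a y) l (𝓝 (L y)) := by
  have hequi : Equicontinuous ((↑) ∘ g : α → E → F) :=
    ((NormedSpace.equicontinuous_TFAE g).out 5 1).mp (⟨C, hg⟩ : ∃ C, ∀ a, ‖g a‖ ≤ C)
  have hlim : ∀ y, ∃ c, Tendsto (fun a => g a y) l (𝓝 c) := fun y =>
    CompleteSpace.complete <| (hequi y).cauchy_map_of_mem_closure
      (fun y' hy' => (h y' hy').choose_spec.cauchy_map) (hs y)
  choose f hf using hlim
  exact ⟨.ofTendstoOfBoundedRange f g (tendsto_pi_nhds.2 hf)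
    (isBounded_iff_forall_norm_le.2 ⟨C, forall_mem_range.2 hg⟩), hf⟩
end

theorem LipschitzWith.norm_slope_le {E : Type*} [SeminormedAddCommGroup E] [NormedSpace ℝ E]
    {K : NNReal} {f : ℝ → E} (hf : LipschitzWith K f) (a b : ℝ) : ‖slope f a b‖ ≤ K := by
  rcases eq_or_ne b a with rfl | hba
  · simp
  · rw [slope_def_module, norm_smul, norm_inv, Real.norm_eq_abs,
      inv_mul_le_iff₀ (abs_pos.2 (sub_ne_zero.2 hba)), mul_comm, ← Real.dist_eq, ← dist_eq_norm]
    exact hf.dist_le_mul b a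

section
variable {E F : Type*} [NormedAddCommGroup E] [NormedSpace ℝ E] [NormedAddCommGroup F]
  [NormedSpace ℝ F] {K : NNReal} {f : ℝ → E →L[ℝ] F}

theorem LipschitzWith.exists_hasDerivAt_apply_of_dense [CompleteSpace F] (hf : LipschitzWith K f)
    {s : Set E} (hs : Dense s) {t : ℝ} (ht : ∀ y ∈ s, DifferentiableAt ℝ (fun u => f u y) t) :
    ∃ L : E →L[ℝ] F, ∀ y, HasDerivAt (fun u => f u y) (L y) t := by
  have slope_apply : ∀ y, (fun u => slope f t u y) = slope (fun u => f u y) t :=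
    fun _ => rfl
  simp_rw [hasDerivAt_iff_tendsto_slope, ← slope_apply]
  exact ContinuousLinearMap.exists_tendsto_apply_of_dense (hf.norm_slope_le t) hs fun y hy =>
    ⟨_, by simpa only [← slope_apply] using (ht y hy).hasDerivAt.tendsto_slope⟩

theorem LipschitzWith.exists_ae_hasDerivAt_apply [TopologicalSpace.SeparableSpace E]
    [FiniteDimensional ℝ F] [MeasurableSpace F] [BorelSpace F] (hf : LipschitzWith K f) :
    ∃ f' : ℝ → E →L[ℝ] F, (∀ y, Measurable fun t => f' t y) ∧
      ∀ᵐ t, ∀ y, HasDerivAt (fun u => f u y) (f' t y) t := by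
  obtain ⟨s, hs_count, hs_dense⟩ := TopologicalSpace.exists_countable_dense E
  set G := ⋂ y ∈ s, {t | DifferentiableAt ℝ (fun u => f u y) t}
  have hG : MeasurableSet G :=
    .biInter hs_count fun y _ => measurableSet_of_differentiableAt ℝ _
  have hG_ae : ∀ᵐ t, t ∈ G := by
    simp only [G, mem_iInter₂, mem_ofPred_eq]
    exact (ae_ball_iff hs_count).2 fun y _ =>
      ((ContinuousLinearMap.apply ℝ F y).lipschitz.comp hf).ae_differentiableAt
  choose! L hL using fun t (ht : t ∈ G) =>
    hf.exists_hasDerivAt_apply_of_dense hs_dense (mem_iInter₂.1 ht)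
  refine ⟨G.indicator L, fun y => ?_, ?_⟩
  · have : (fun t => G.indicator L t y) = G.indicator (deriv fun u => f u y) := by
      funext t
      by_cases ht : t ∈ G
      · simp [ht, (hL t ht y).deriv]
      · simp [ht]
    rw [this]
    exact (measurable_deriv _).indicator hG
  · filter_upwards [hG_ae] with t ht y
    simpa [ht] using hL t ht y
end

theorem stmt7_general {Y : Type*} [NormedAddCommGroup Y] [NormedSpace ℝ Y]
    [TopologicalSpace.SeparableSpace Y]
    (a b : ℝ) (hab : a ≤ b) (K : NNReal) (γ : ℝ → Y →L[ℝ] ℝ)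
    (hγ : LipschitzOnWith K γ (Set.Icc a b)) :
    ∃ γ' : ℝ → Y →L[ℝ] ℝ,
      (∀ y : Y, Measurable fun t => γ' t y) ∧
      ∀ᵐ t ∂(volume.restrict (Set.Icc a b)), ∀ y : Y,
        Tendsto (fun h : ℝ => ((γ (t + h)) y - (γ t) y) / h)
          (𝓝[{h : ℝ | t + h ∈ Set.Icc a b} \ {0}] 0)
          (𝓝 ((γ' t) y)) := by
  have hγe : LipschitzWith K ((Icc a b).domRestrict γ ∘ projIcc a b hab) := by
    simpa only [mul_one] using hγ.to_restrict.comp (LipschitzWith.projIcc hab)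
  obtain ⟨γ', hγ'_meas, hγ'_deriv⟩ := hγe.exists_ae_hasDerivAt_apply
  refine ⟨γ', hγ'_meas, ?_⟩
  filter_upwards [ae_restrict_mem measurableSet_Icc, ae_restrict_of_ae hγ'_deriv]
    with t ht hγ't y
  refine ((hγ't y).tendsto_slope_zero.mono_left
    (nhdsWithin_mono 0 (sdiff_subset_compl _ _))).congr' ?_
  filter_upwards [self_mem_nhdsWithin] with h hh
  simp [projIcc_of_mem hab hh.1, projIcc_of_mem hab ht, div_eq_inv_mul]

/-- Weak* differentiability a.e. of Lipschitz curves into the dual of a separable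
Banach space, with a weak* measurable derivative and an exceptional null set
independent of the pairing vector. -/
theorem stmt7 {Y : Type*} [NormedAddCommGroup Y] [NormedSpace ℝ Y] [CompleteSpace Y]
    [TopologicalSpace.SeparableSpace Y]
    (a b : ℝ) (hab : a ≤ b) (K : NNReal) (γ : ℝ → Y →L[ℝ] ℝ)
    (hγ : LipschitzOnWith K γ (Set.Icc a b)) :
    ∃ γ' : ℝ → Y →L[ℝ] ℝ,
      (∀ y : Y, Measurable fun t => γ' t y) ∧
      ∀ᵐ t ∂(volume.restrict (Set.Icc a b)), ∀ y : Y,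
        Tendsto (fun h : ℝ => ((γ (t + h)) y - (γ t) y) / h)
          (𝓝[{h : ℝ | t + h ∈ Set.Icc a b} \ {0}] 0)
          (𝓝 ((γ' t) y)) :=
  stmt7_general a b hab K γ hγ
end

section
/- Let Y be a separable Banach space and γ : [a,b] → Y* Lipschitz with weak* derivative γ' defined a.e. Let s_γ(t) denote the length of γ restricted to [a,t]. Then for almost every t ∈ [a,b], ‖γ'(t)‖ = lim_{h→0} ‖γ(t+h) − γ(t)‖/|h| = s_γ'(t). -/
/-!
Let `F = s_γ` be the length function and `Φ u = ∫ t in a..u, ‖γ' t‖`. Chords are dominated by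
length, `‖γ w - γ v‖ ≤ F w - F v`; differentiating `F · ‖y‖ - γ · y` gives `‖γ' t‖ ≤ F' t`
wherever `F` (a monotone function) is differentiable. Conversely, the fundamental theorem of
calculus for the Lipschitz functions `t ↦ γ t y` bounds every chord by `∫ ‖γ'‖`, hence the length
as well, so `F - Φ` is antitone and `F' ≤ Φ' = ‖γ'‖` at Lebesgue points; separability makes
`‖γ'‖` a countable supremum of measurable functions, so that `Φ` makes sense. Once `F' t = ‖γ' t‖`,
the metric slope at `t` is squeezed between `|γ' t y|` (for `‖y‖ < 1`) and the slope of `F`.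
-/

open MeasureTheory Set Filter Topology
open scoped NNReal

section Variation

variable {α E : Type*} [LinearOrder α]

theorem eVariationOn_le_of_edist_le [PseudoEMetricSpace E] {F : Type*} [PseudoEMetricSpace F]
    {f : α → E} {g : α → F} {s : Set α}
    (h : ∀ x ∈ s, ∀ y ∈ s, edist (f x) (f y) ≤ edist (g x) (g y)) :
    eVariationOn f s ≤ eVariationOn g s :=
  iSup_mono fun p => Finset.sum_le_sum fun _ _ => h _ (p.2.2.2 _) _ (p.2.2.2 _)

theorem eVariationOn_Icc_toReal_le_of_dist_le_sub [PseudoMetricSpace E] {f : α → E}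
    {φ : α → ℝ} {v w : α} (hvw : v ≤ w)
    (h : ∀ x ∈ Icc v w, ∀ y ∈ Icc v w, x ≤ y → dist (f x) (f y) ≤ φ y - φ x) :
    (eVariationOn f (Icc v w)).toReal ≤ φ w - φ v := by
  have hφ : MonotoneOn φ (Icc v w) := fun x hx y hy hxy =>
    sub_nonneg.1 (dist_nonneg.trans (h x hx y hy hxy))
  have hedist : ∀ x ∈ Icc v w, ∀ y ∈ Icc v w, edist (f x) (f y) ≤ edist (φ x) (φ y) := by
    intro x hx y hy
    wlog hxy : x ≤ y generalizing x y
    · rw [edist_comm, edist_comm (φ x)]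
      exact this y hy x hx (le_of_not_ge hxy)
    rw [edist_dist, edist_dist, Real.dist_eq, abs_sub_comm,
      abs_of_nonneg (sub_nonneg.2 (hφ hx hy hxy))]
    exact ENNReal.ofReal_le_ofReal (h x hx y hy hxy)
  have hvar : eVariationOn φ (Icc v w) = ENNReal.ofReal (φ w - φ v) := by
    simpa using hφ.eVariationOn_eq (left_mem_Icc.2 hvw) (right_mem_Icc.2 hvw)
  exact ENNReal.toReal_le_of_le_ofReal (sub_nonneg.2 (hφ (left_mem_Icc.2 hvw)
    (right_mem_Icc.2 hvw) hvw)) (hvar ▸ eVariationOn_le_of_edist_le hedist)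

theorem eVariationOn_Icc_toReal_sub [PseudoEMetricSpace E] {f : α → E} {a v w : α}
    (hav : a ≤ v) (hvw : v ≤ w) (hfin : eVariationOn f (Icc a w) ≠ ⊤) :
    (eVariationOn f (Icc a w)).toReal - (eVariationOn f (Icc a v)).toReal =
      (eVariationOn f (Icc v w)).toReal := by
  have hsplit := eVariationOn.Icc_add_Icc f hav hvw (mem_univ v)
  simp only [univ_inter] at hsplit
  rw [← hsplit] at hfin ⊢
  rw [ENNReal.toReal_add (ENNReal.add_ne_top.1 hfin).1 (ENNReal.add_ne_top.1 hfin).2]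
  ring

theorem dist_le_eVariationOn_Icc_toReal_sub [PseudoMetricSpace E] {f : α → E} {a v w : α}
    (hav : a ≤ v) (hvw : v ≤ w) (hfin : eVariationOn f (Icc a w) ≠ ⊤) :
    dist (f v) (f w) ≤
      (eVariationOn f (Icc a w)).toReal - (eVariationOn f (Icc a v)).toReal := by
  rw [eVariationOn_Icc_toReal_sub hav hvw hfin, dist_edist]
  exact ENNReal.toReal_mono (ne_top_of_le_ne_top hfin (eVariationOn.mono f
    (Icc_subset_Icc_left hav))) (eVariationOn.edist_le f (left_mem_Icc.2 hvw) (right_mem_Icc.2 hvw))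

end Variation

namespace ContinuousLinearMap

variable {𝕜 E F : Type*} [NontriviallyNormedField 𝕜] [NormedAddCommGroup E] [NormedSpace 𝕜 E]
  [NormedAddCommGroup F] [NormedSpace 𝕜 F]

theorem norm_eq_iSup_div_of_denseRange {ι : Type*} {d : ι → E} (hd : DenseRange d)
    (f : E →L[𝕜] F) : ‖f‖ = ⨆ i, ‖f (d i)‖ / ‖d i‖ := by
  have : Nonempty ι := hd.nonempty
  have hle : ∀ i, ‖f (d i)‖ / ‖d i‖ ≤ ‖f‖ := fun i =>
    div_le_of_le_mul₀ (norm_nonneg _) (norm_nonneg _) (f.le_opNorm _)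
  have hbdd : BddAbove (range fun i => ‖f (d i)‖ / ‖d i‖) := ⟨‖f‖, forall_mem_range.2 hle⟩
  refine le_antisymm (f.opNorm_le_bound (Real.iSup_nonneg fun i => by positivity) fun x => ?_)
    (ciSup_le hle)
  refine hd.induction_on x (isClosed_le (by fun_prop) (by fun_prop)) fun i => ?_
  rcases eq_or_ne (d i) 0 with h0 | h0
  · simp [h0]
  · exact (div_le_iff₀ (norm_pos_iff.2 h0)).1 (le_ciSup hbdd i)

theorem aemeasurable_norm_of_forall_aemeasurable_apply [TopologicalSpace.SeparableSpace E]
    [MeasurableSpace F] [OpensMeasurableSpace F] {Ω : Type*} [MeasurableSpace Ω] {μ : Measure Ω}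
    {f : Ω → E →L[𝕜] F} (hf : ∀ y, AEMeasurable (fun ω => f ω y) μ) :
    AEMeasurable (fun ω => ‖f ω‖) μ := by
  have : Nonempty E := ⟨0⟩
  simp_rw [norm_eq_iSup_div_of_denseRange (TopologicalSpace.denseRange_denseSeq E)]
  exact AEMeasurable.iSup fun i => (hf _).norm.div_const _

end ContinuousLinearMap

theorem ae_restrict_Icc_mem_Ioo (a b : ℝ) : ∀ᵐ t ∂volume.restrict (Icc a b), t ∈ Ioo a b := by
  rw [← Measure.restrict_congr_set Ioo_ae_eq_Icc]
  exact ae_restrict_mem measurableSet_Ioo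

theorem nhdsWithin_setOf_add_mem_diff_zero {t : ℝ} {s : Set ℝ} (hs : s ∈ 𝓝 t) :
    𝓝[{h : ℝ | t + h ∈ s} \ {0}] 0 = 𝓝[≠] 0 := by
  have : {h : ℝ | t + h ∈ s} ∈ 𝓝 0 :=
    (continuous_const.add continuous_id).continuousAt.preimage_mem_nhds (by simpa using hs)
  rw [sdiff_eq, nhdsWithin_inter_of_mem (mem_nhdsWithin_of_mem_nhds this)]

theorem hasDerivAt_of_tendsto_slope_nhdsWithin_setOf_add_mem {f : ℝ → ℝ} {f' t : ℝ} {s : Set ℝ}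
    (hs : s ∈ 𝓝 t)
    (hf : Tendsto (fun h => (f (t + h) - f t) / h) (𝓝[{h : ℝ | t + h ∈ s} \ {0}] 0) (𝓝 f')) :
    HasDerivAt f f' t := by
  rw [nhdsWithin_setOf_add_mem_diff_zero hs] at hf
  exact hasDerivAt_iff_tendsto_slope_zero.2 (by simpa [inv_mul_eq_div] using hf)

theorem MeasureTheory.IntegrableOn.ae_hasDerivAt_integral_Icc {f : ℝ → ℝ} {a b : ℝ} (hab : a ≤ b)
    (hf : IntegrableOn f (Icc a b)) :
    ∀ᵐ t ∂volume.restrict (Icc a b), HasDerivAt (fun u => ∫ x in a..u, f x) (f t) t := by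
  rw [ae_restrict_iff' measurableSet_Icc]
  filter_upwards [(hf.mono_set (uIcc_of_le hab).subset).intervalIntegrable.ae_hasDerivAt_integral]
    with t ht hmem
  exact ht (uIcc_of_le hab ▸ hmem) a left_mem_uIcc

theorem LipschitzOnWith.boundedVariationOn_Icc {E : Type*} [PseudoEMetricSpace E] {f : ℝ → E}
    {K : ℝ≥0} {s : Set ℝ} {v w : ℝ} (hf : LipschitzOnWith K f s) (hvw : v ≤ w)
    (hsub : Icc v w ⊆ s) : BoundedVariationOn f (Icc v w) := by
  simpa only [inter_self] using
    (hf.mono hsub).locallyBoundedVariationOn v w (left_mem_Icc.2 hvw) (right_mem_Icc.2 hvw)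

theorem tendsto_abs_sub_div_abs_of_hasDerivAt {f : ℝ → ℝ} {f' t : ℝ} (hf : HasDerivAt f f' t) :
    Tendsto (fun h => |f (t + h) - f t| / |h|) (𝓝[≠] 0) (𝓝 |f'|) := by
  simpa [inv_mul_eq_div, abs_div] using (hasDerivAt_iff_tendsto_slope_zero.1 hf).abs

theorem HasDerivAt.le_of_forall_sub_le_sub {f g : ℝ → ℝ} {f' g' x : ℝ} {s : Set ℝ}
    (hf : HasDerivAt f f' x) (hg : HasDerivAt g g' x) (hs : s ∈ 𝓝 x)
    (h : ∀ v ∈ s, ∀ w ∈ s, v ≤ w → f w - f v ≤ g w - g v) : f' ≤ g' := by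
  have hmono : MonotoneOn (g - f) s := fun v hv w hw hvw => by
    simp only [Pi.sub_apply]; linarith [h v hv w hw hvw]
  have hacc : AccPt x (𝓟 s) := by
    simpa using (PerfectSpace.univ_preperfect x (mem_univ x)).nhds_inter hs
  linarith [(hg.sub hf).hasDerivWithinAt.nonneg_of_monotoneOn hacc hmono]

section WeakStar

variable {E : Type*} [NormedAddCommGroup E] [NormedSpace ℝ E] {γ γ' : ℝ → E →L[ℝ] ℝ}

theorem opNorm_le_of_hasDerivAt_apply {φ : E →L[ℝ] ℝ} {F : ℝ → ℝ} {F' t : ℝ} {s : Set ℝ}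
    (hγ : ∀ y, HasDerivAt (fun r => γ r y) (φ y) t) (hF : HasDerivAt F F' t) (hs : s ∈ 𝓝 t)
    (hchord : ∀ v ∈ s, ∀ w ∈ s, v ≤ w → ‖γ w - γ v‖ ≤ F w - F v) : ‖φ‖ ≤ F' := by
  have hF' : 0 ≤ F' := (hasDerivAt_const t 0).le_of_forall_sub_le_sub hF hs fun v hv w hw hvw =>
    by simpa using (norm_nonneg _).trans (hchord v hv w hw hvw)
  have hle : ∀ y, φ y ≤ F' * ‖y‖ := fun y =>
    (hγ y).le_of_forall_sub_le_sub (hF.mul_const ‖y‖) hs fun v hv w hw hvw =>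
      calc γ w y - γ v y ≤ ‖(γ w - γ v) y‖ := Real.le_norm_self _
        _ ≤ ‖γ w - γ v‖ * ‖y‖ := ContinuousLinearMap.le_opNorm _ _
        _ ≤ (F w - F v) * ‖y‖ := by gcongr; exact hchord v hv w hw hvw
        _ = F w * ‖y‖ - F v * ‖y‖ := by ring
  refine φ.opNorm_le_bound hF' fun y => abs_le.2 ⟨?_, hle y⟩
  exact neg_le.2 (by simpa using hle (-y))

theorem hasDerivAt_opNorm_of_chord_le_of_sub_le_sub {φ : E →L[ℝ] ℝ} {F Φ : ℝ → ℝ} {t : ℝ}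
    {s : Set ℝ} (hγ : ∀ y, HasDerivAt (fun r => γ r y) (φ y) t) (hF : DifferentiableAt ℝ F t)
    (hΦ : HasDerivAt Φ ‖φ‖ t) (hs : s ∈ 𝓝 t)
    (hchord : ∀ v ∈ s, ∀ w ∈ s, v ≤ w → ‖γ w - γ v‖ ≤ F w - F v)
    (hFΦ : ∀ v ∈ s, ∀ w ∈ s, v ≤ w → F w - F v ≤ Φ w - Φ v) : HasDerivAt F ‖φ‖ t := by
  have hF' := hF.hasDerivAt
  rwa [le_antisymm (hF'.le_of_forall_sub_le_sub hΦ hs hFΦ)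
    (opNorm_le_of_hasDerivAt_apply hγ hF' hs hchord)] at hF'

theorem tendsto_norm_sub_div_abs_of_hasDerivAt_apply {φ : E →L[ℝ] ℝ} {F : ℝ → ℝ} {t : ℝ}
    {s : Set ℝ} (hγ : ∀ y, HasDerivAt (fun r => γ r y) (φ y) t) (hF : HasDerivAt F ‖φ‖ t)
    (hs : s ∈ 𝓝 t) (hchord : ∀ v ∈ s, ∀ w ∈ s, v ≤ w → ‖γ w - γ v‖ ≤ F w - F v) :
    Tendsto (fun h => ‖γ (t + h) - γ t‖ / |h|) (𝓝[≠] 0) (𝓝 ‖φ‖) := by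
  have hmem : ∀ᶠ h in 𝓝[≠] (0 : ℝ), t + h ∈ s := nhdsWithin_le_nhds <|
    (continuous_const.add continuous_id).continuousAt.preimage_mem_nhds (by simpa using hs)
  refine tendsto_order.2 ⟨fun c hc => ?_, fun c hc => ?_⟩
  · obtain ⟨y, hy, hcy⟩ := φ.exists_lt_apply_of_lt_opNorm hc
    filter_upwards [(tendsto_abs_sub_div_abs_of_hasDerivAt (hγ y)).eventually (lt_mem_nhds hcy)]
      with h hh
    refine hh.trans_le (div_le_div_of_nonneg_right ?_ (abs_nonneg h))
    calc |γ (t + h) y - γ t y| = ‖(γ (t + h) - γ t) y‖ := rfl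
      _ ≤ ‖γ (t + h) - γ t‖ * ‖y‖ := ContinuousLinearMap.le_opNorm _ _
      _ ≤ ‖γ (t + h) - γ t‖ := mul_le_of_le_one_right (norm_nonneg _) hy.le
  · have hF' := tendsto_abs_sub_div_abs_of_hasDerivAt hF
    rw [abs_norm] at hF'
    filter_upwards [hF'.eventually (gt_mem_nhds hc), hmem] with h hh hts
    refine lt_of_le_of_lt (div_le_div_of_nonneg_right ?_ (abs_nonneg h)) hh
    have ht : t ∈ s := mem_of_mem_nhds hs
    rcases le_total t (t + h) with hle | hle
    · exact (hchord _ ht _ hts hle).trans (le_abs_self _)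
    · rw [norm_sub_rev, abs_sub_comm]
      exact (hchord _ hts _ ht hle).trans (le_abs_self _)

theorem norm_sub_le_integral_of_hasDerivAt_apply {K : ℝ≥0} {v w : ℝ} (hvw : v ≤ w)
    (hγ : LipschitzOnWith K γ (Icc v w))
    (hγ' : ∀ᵐ t, t ∈ Ioo v w → ∀ y, HasDerivAt (fun r => γ r y) (γ' t y) t)
    (hint : IntervalIntegrable (fun t => ‖γ' t‖) volume v w) :
    ‖γ w - γ v‖ ≤ ∫ t in v..w, ‖γ' t‖ := by
  refine ContinuousLinearMap.opNorm_le_bound _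
    (intervalIntegral.integral_nonneg hvw fun _ _ => norm_nonneg _) fun y => ?_
  have hac : AbsolutelyContinuousOnInterval (fun r => γ r y) v w := by
    rw [← uIcc_of_le hvw] at hγ
    exact ((ContinuousLinearMap.apply ℝ ℝ y).lipschitz.comp_lipschitzOnWith hγ
      ).absolutelyContinuousOnInterval
  have hderiv : ∀ᵐ t, t ∈ Ioc v w → ‖deriv (fun r => γ r y) t‖ ≤ ‖γ' t‖ * ‖y‖ := by
    filter_upwards [hγ', measure_singleton w |> compl_mem_ae_iff.2] with t ht htw hmem
    rw [(ht ⟨hmem.1, hmem.2.lt_of_ne htw⟩ y).deriv]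
    exact ContinuousLinearMap.le_opNorm _ _
  calc ‖(γ w - γ v) y‖ = ‖∫ t in v..w, deriv (fun r => γ r y) t‖ := by
        rw [hac.integral_deriv_eq_sub]; rfl
    _ ≤ ∫ t in v..w, ‖γ' t‖ * ‖y‖ :=
        intervalIntegral.norm_integral_le_of_norm_le hvw hderiv (hint.mul_const _)
    _ = (∫ t in v..w, ‖γ' t‖) * ‖y‖ := intervalIntegral.integral_mul_const _ _

variable {a b : ℝ} {K : ℝ≥0}

theorem integrableOn_norm_of_ae_hasDerivAt_apply [TopologicalSpace.SeparableSpace E]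
    (hγ : LipschitzOnWith K γ (Icc a b))
    (hγ' : ∀ᵐ t ∂volume.restrict (Icc a b), ∀ y, HasDerivAt (fun r => γ r y) (γ' t y) t) :
    IntegrableOn (fun t => ‖γ' t‖) (Icc a b) := by
  have hbound : ∀ᵐ t ∂volume.restrict (Icc a b), ‖γ' t‖ ≤ K := by
    filter_upwards [hγ', ae_restrict_Icc_mem_Ioo a b] with t hγt hmem
    refine opNorm_le_of_hasDerivAt_apply hγt (hasDerivAt_mul_const (K : ℝ))
      (Icc_mem_nhds hmem.1 hmem.2) fun v hv w hw hvw => ?_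
    simpa [← dist_eq_norm, Real.dist_eq, abs_of_nonneg (sub_nonneg.2 hvw), sub_mul, mul_comm]
      using hγ.dist_le_mul w hw v hv
  refine Integrable.of_bound (AEMeasurable.aestronglyMeasurable ?_) K (by simpa using hbound)
  refine ContinuousLinearMap.aemeasurable_norm_of_forall_aemeasurable_apply fun y =>
    (measurable_deriv fun r => γ r y).aemeasurable.congr ?_
  filter_upwards [hγ'] with t ht using (ht y).deriv

theorem eVariationOn_Icc_toReal_sub_le_integral_sub (hγ : LipschitzOnWith K γ (Icc a b))
    (hγ' : ∀ᵐ t ∂volume.restrict (Icc a b), ∀ y, HasDerivAt (fun r => γ r y) (γ' t y) t)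
    (hint : IntegrableOn (fun t => ‖γ' t‖) (Icc a b)) {v w : ℝ} (hv : v ∈ Icc a b)
    (hw : w ∈ Icc a b) (hvw : v ≤ w) :
    (eVariationOn γ (Icc a w)).toReal - (eVariationOn γ (Icc a v)).toReal ≤
      (∫ t in a..w, ‖γ' t‖) - ∫ t in a..v, ‖γ' t‖ := by
  have hii : ∀ {x y}, x ∈ Icc a b → y ∈ Icc a b →
      IntervalIntegrable (fun t => ‖γ' t‖) volume x y := fun hx hy =>
    (hint.mono_set (uIcc_subset_Icc hx hy)).intervalIntegrable
  rw [eVariationOn_Icc_toReal_sub hv.1 hvw (hγ.boundedVariationOn_Icc (hv.1.trans hvw)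
    (Icc_subset_Icc_right hw.2))]
  refine eVariationOn_Icc_toReal_le_of_dist_le_sub (φ := fun u => ∫ t in a..u, ‖γ' t‖) hvw
    fun x hx y hy hxy => ?_
  have hsub : Icc x y ⊆ Icc a b := Icc_subset_Icc (hv.1.trans hx.1) (hy.2.trans hw.2)
  have hxab : x ∈ Icc a b := hsub (left_mem_Icc.2 hxy)
  have hyab : y ∈ Icc a b := hsub (right_mem_Icc.2 hxy)
  have ha : a ∈ Icc a b := left_mem_Icc.2 (hv.1.trans hv.2)
  rw [dist_comm, dist_eq_norm, intervalIntegral.integral_interval_sub_left (hii ha hyab)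
    (hii ha hxab)]
  refine norm_sub_le_integral_of_hasDerivAt_apply hxy (hγ.mono hsub) ?_ (hii hxab hyab)
  filter_upwards [(ae_restrict_iff' measurableSet_Icc).1 hγ'] with t ht htxy
  exact ht (hsub (Ioo_subset_Icc_self htxy))

end WeakStar

theorem stmt10_general {Y : Type*} [NormedAddCommGroup Y] [NormedSpace ℝ Y]
    [TopologicalSpace.SeparableSpace Y]
    (a b : ℝ) (hab : a ≤ b) (K : NNReal) (γ : ℝ → Y →L[ℝ] ℝ)
    (hγ : LipschitzOnWith K γ (Set.Icc a b))
    (γ' : ℝ → Y →L[ℝ] ℝ)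
    (hdiff : ∀ᵐ t ∂(volume.restrict (Set.Icc a b)), ∀ y : Y,
      Tendsto (fun h : ℝ => ((γ (t + h)) y - (γ t) y) / h)
        (𝓝[{h : ℝ | t + h ∈ Set.Icc a b} \ {0}] 0)
        (𝓝 ((γ' t) y))) :
    ∀ᵐ t ∂(volume.restrict (Set.Icc a b)),
      Tendsto (fun h : ℝ => ‖γ (t + h) - γ t‖ / |h|)
        (𝓝[{h : ℝ | t + h ∈ Set.Icc a b} \ {0}] 0) (𝓝 ‖γ' t‖) ∧
      HasDerivWithinAt (fun u => (eVariationOn γ (Set.Icc a u)).toReal)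
        ‖γ' t‖ (Set.Icc a b) t := by
  set F : ℝ → ℝ := fun u => (eVariationOn γ (Icc a u)).toReal
  set Φ : ℝ → ℝ := fun u => ∫ t in a..u, ‖γ' t‖
  have hweak : ∀ᵐ t ∂volume.restrict (Icc a b),
      t ∈ Ioo a b ∧ ∀ y, HasDerivAt (fun r => γ r y) (γ' t y) t := by
    filter_upwards [hdiff, ae_restrict_Icc_mem_Ioo a b] with t ht hmem using
      ⟨hmem, fun y => hasDerivAt_of_tendsto_slope_nhdsWithin_setOf_add_mem
        (Icc_mem_nhds hmem.1 hmem.2) (ht y)⟩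
  have hγ' := hweak.mono fun t ht => ht.2
  have hint : IntegrableOn (fun t => ‖γ' t‖) (Icc a b) :=
    integrableOn_norm_of_ae_hasDerivAt_apply hγ hγ'
  have hchord : ∀ v ∈ Icc a b, ∀ w ∈ Icc a b, v ≤ w → ‖γ w - γ v‖ ≤ F w - F v := by
    intro v hv w hw hvw
    rw [← dist_eq_norm, dist_comm]
    exact dist_le_eVariationOn_Icc_toReal_sub hv.1 hvw
      (hγ.boundedVariationOn_Icc (hv.1.trans hvw) (Icc_subset_Icc_right hw.2))
  have hFΦ : ∀ v ∈ Icc a b, ∀ w ∈ Icc a b, v ≤ w → F w - F v ≤ Φ w - Φ v :=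
    fun v hv w hw hvw => eVariationOn_Icc_toReal_sub_le_integral_sub hγ hγ' hint hv hw hvw
  have hFmono : MonotoneOn F (Icc a b) := fun v hv w hw hvw =>
    sub_nonneg.1 ((norm_nonneg _).trans (hchord v hv w hw hvw))
  filter_upwards [hweak, hFmono.ae_differentiableWithinAt measurableSet_Icc,
    hint.ae_hasDerivAt_integral_Icc hab] with t ⟨hmem, hγt⟩ hFt hΦt
  have hnhds : Icc a b ∈ 𝓝 t := Icc_mem_nhds hmem.1 hmem.2
  have hF := hasDerivAt_opNorm_of_chord_le_of_sub_le_sub hγt (hFt.differentiableAt hnhds) hΦt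
    hnhds hchord hFΦ
  rw [nhdsWithin_setOf_add_mem_diff_zero hnhds]
  exact ⟨tendsto_norm_sub_div_abs_of_hasDerivAt_apply hγt hF hnhds hchord, hF.hasDerivWithinAt⟩

/-- For a Lipschitz curve `γ` into the dual of a separable Banach space with a.e. weak*
derivative `γ'`, for a.e. `t`: the dual norm `‖γ'(t)‖` equals the metric speed of `γ`
at `t` and equals the derivative of the length function `s_γ` at `t`. -/
theorem stmt10 {Y : Type*} [NormedAddCommGroup Y] [NormedSpace ℝ Y] [CompleteSpace Y]
    [TopologicalSpace.SeparableSpace Y]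
    (a b : ℝ) (hab : a ≤ b) (K : NNReal) (γ : ℝ → Y →L[ℝ] ℝ)
    (hγ : LipschitzOnWith K γ (Set.Icc a b))
    (γ' : ℝ → Y →L[ℝ] ℝ)
    (hdiff : ∀ᵐ t ∂(volume.restrict (Set.Icc a b)), ∀ y : Y,
      Tendsto (fun h : ℝ => ((γ (t + h)) y - (γ t) y) / h)
        (𝓝[{h : ℝ | t + h ∈ Set.Icc a b} \ {0}] 0)
        (𝓝 ((γ' t) y))) :
    ∀ᵐ t ∂(volume.restrict (Set.Icc a b)),
      Tendsto (fun h : ℝ => ‖γ (t + h) - γ t‖ / |h|)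
        (𝓝[{h : ℝ | t + h ∈ Set.Icc a b} \ {0}] 0) (𝓝 ‖γ' t‖) ∧
      HasDerivWithinAt (fun u => (eVariationOn γ (Set.Icc a u)).toReal)
        ‖γ' t‖ (Set.Icc a b) t :=
  stmt10_general a b hab K γ hγ γ' hdiff
end

section
/- Let X be a complete separable metric space with dense sequence (xᵢ), and let κ : X → ℓ^∞ be the associated Kuratowski embedding. Let γ̄ : [0,l] → κ(X) ⊆ ℓ^∞ be a 1-Lipschitz curve, weak* differentiable at a point t₀ ∈ (0,l) (with respect to the duality ℓ^∞ = (ℓ¹)*), such that lim_{h→0} ‖γ̄(t₀+h) − γ̄(t₀)‖_∞/|h| = 1. Then γ̄' is not approximately continuous at t₀; more precisely, for every sufficiently small h > 0 there exist sets F_h⁺ ⊆ (t₀, t₀+h) and F_h⁻ ⊆ (t₀−h, t₀), each of Lebesgue measure at least h/8, such that ‖γ̄'(t⁺) − γ̄'(t⁻)‖_∞ ≥ 1/4 for all t⁺ ∈ F_h⁺ and t⁻ ∈ F_h⁻ at which γ̄ is weak* differentiable. -/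
/-!
Choose `x i` so close to the point `γ t₀ = κ z` that `γ t - γ t₀` is, in its `i`-th coordinate
`dist w (x i) - dist z (x i)` (where `γ t = κ w`), almost as large as in norm. Unit speed at `t₀`
then makes the 1-Lipschitz coordinate `γᵢ` rise by `≥ h/4` both from `t₀` to `t₀ + h` and from
`t₀` to `t₀ - h`. Hence `γᵢ' ≥ 1/7` on a set of measure `≥ h/8` to the right of `t₀` and
`γᵢ' ≤ -1/7` on such a set to the left, and there the weak* derivatives, whose `i`-th
coordinates are the `γᵢ'`, are at distance `≥ 2/7`.
-/

open MeasureTheory Set Filter Topology ENNReal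

/-- `γ` is weak* differentiable at `t` with weak* derivative `D`, with respect to the
duality `ℓ^∞ = (ℓ¹)*`. -/
def IsWeakStarDerivAt (γ : ℝ → lp (fun _ : ℕ => ℝ) ∞) (t : ℝ)
    (D : lp (fun _ : ℕ => ℝ) ∞) : Prop :=
  ∀ f : lp (fun _ : ℕ => ℝ) 1,
    Tendsto (fun h : ℝ =>
        ∑' i : ℕ, (f : ℕ → ℝ) i * (((γ (t + h) : ℕ → ℝ) i - (γ t : ℕ → ℝ) i) / h))
      (𝓝[≠] 0) (𝓝 (∑' i : ℕ, (f : ℕ → ℝ) i * (D : ℕ → ℝ) i))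

open scoped lp

theorem IsWeakStarDerivAt.hasDerivAt_apply {γ : ℝ → ℓ^∞(ℕ, ℝ)} {t : ℝ} {D : ℓ^∞(ℕ, ℝ)}
    (hD : IsWeakStarDerivAt γ t D) (i : ℕ) :
    HasDerivAt (fun s => (γ s : ℕ → ℝ) i) ((D : ℕ → ℝ) i) t := by
  have hpair : ∀ q : ℕ → ℝ, ∑' j, ((lp.single 1 i (1 : ℝ)) : ℕ → ℝ) j * q j = q i := fun q => by
    rw [tsum_eq_single i fun j hj => by rw [lp.single_apply_ne 1 i _ hj, zero_mul],
      lp.single_apply_self, one_mul]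
  have := hD (lp.single 1 i 1)
  simp only [hpair] at this
  rw [hasDerivAt_iff_tendsto_slope_zero]
  refine this.congr fun s => ?_
  rw [smul_eq_mul, div_eq_inv_mul]

theorem IsWeakStarDerivAt.abs_deriv_apply_sub_le_norm_sub {γ : ℝ → ℓ^∞(ℕ, ℝ)} {t t' : ℝ}
    {D D' : ℓ^∞(ℕ, ℝ)} (hD : IsWeakStarDerivAt γ t D) (hD' : IsWeakStarDerivAt γ t' D') (i : ℕ) :
    |deriv (fun s => (γ s : ℕ → ℝ) i) t - deriv (fun s => (γ s : ℕ → ℝ) i) t'| ≤ ‖D - D'‖ := by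
  rw [(hD.hasDerivAt_apply i).deriv, (hD'.hasDerivAt_apply i).deriv, ← Real.norm_eq_abs,
    ← Pi.sub_apply, ← lp.coeFn_sub]
  exact lp.norm_apply_le_norm ENNReal.top_ne_zero _ i

section Kuratowski

variable {X : Type*} [MetricSpace X] {x : ℕ → X} {κ : X → ℓ^∞(ℕ, ℝ)}

theorem norm_sub_le_dist_of_kuratowski
    (hκ : ∀ (z : X) (i : ℕ), (κ z : ℕ → ℝ) i = dist z (x i) - dist (x i) (x 0)) (a b : X) :
    ‖κ a - κ b‖ ≤ dist a b := by
  refine lp.norm_le_of_forall_le dist_nonneg fun j => ?_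
  rw [lp.coeFn_sub, Pi.sub_apply, hκ, hκ, Real.norm_eq_abs, sub_sub_sub_cancel_right]
  exact abs_dist_sub_le a b (x j)

theorem norm_sub_sub_two_mul_dist_le_apply_sub_of_kuratowski
    (hκ : ∀ (z : X) (i : ℕ), (κ z : ℕ → ℝ) i = dist z (x i) - dist (x i) (x 0))
    (w z : X) (i : ℕ) :
    ‖κ w - κ z‖ - 2 * dist z (x i) ≤ (κ w : ℕ → ℝ) i - (κ z : ℕ → ℝ) i := by
  have hnorm := norm_sub_le_dist_of_kuratowski hκ w z
  have htri := dist_triangle w (x i) z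
  rw [dist_comm (x i) z] at htri
  rw [hκ, hκ]
  linarith

theorem exists_norm_sub_sub_le_apply_sub_of_kuratowski (hx : DenseRange x)
    (hκ : ∀ (z : X) (i : ℕ), (κ z : ℕ → ℝ) i = dist z (x i) - dist (x i) (x 0))
    {v : ℓ^∞(ℕ, ℝ)} (hv : v ∈ range κ) {r : ℝ} (hr : 0 < r) :
    ∃ i, ∀ w ∈ range κ, ‖w - v‖ - r ≤ (w : ℕ → ℝ) i - (v : ℕ → ℝ) i := by
  obtain ⟨z, rfl⟩ := hv
  obtain ⟨i, hi⟩ := hx.exists_dist_lt z (half_pos hr)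
  refine ⟨i, ?_⟩
  rintro _ ⟨w, rfl⟩
  linarith [norm_sub_sub_two_mul_dist_le_apply_sub_of_kuratowski hκ w z i]

end Kuratowski

section RealLipschitz

variable {g : ℝ → ℝ} {a b : ℝ}

/-- Integrate `deriv g ≤ c + (1 - c) 𝟙_G` (valid as `|deriv g| ≤ 1`) and use the fundamental
theorem of calculus for Lipschitz functions. -/
theorem LipschitzOnWith.sub_sub_mul_le_measureReal_setOf_le_deriv (c : ℝ) (hab : a ≤ b)
    (hg : LipschitzOnWith 1 g (Icc a b)) :
    g b - g a - c * (b - a) ≤ (1 - c) * volume.real {t ∈ Ioo a b | c ≤ deriv g t} := by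
  set G := {t ∈ Ioo a b | c ≤ deriv g t}
  have hG : MeasurableSet G :=
    measurableSet_Ioo.inter (measurableSet_le measurable_const (measurable_deriv g))
  have hbound : ∀ t ∈ Ioo a b, deriv g t ≤ c + (1 - c) * G.indicator 1 t := by
    intro t ht
    by_cases htG : t ∈ G
    · have hle := norm_deriv_le_of_lipschitzOn (Icc_mem_nhds ht.1 ht.2) hg
      rw [NNReal.coe_one, Real.norm_eq_abs] at hle
      rw [indicator_of_mem htG, Pi.one_apply]
      linarith [le_abs_self (deriv g t)]
    · rw [indicator_of_notMem htG, mul_zero, add_zero]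
      exact le_of_not_ge fun h => htG ⟨ht, h⟩
  have hac := (hg.mono (uIcc_of_le hab).subset).absolutelyContinuousOnInterval
  have hftc : ∫ t in Ioo a b, deriv g t = g b - g a := by
    rw [← integral_Ioc_eq_integral_Ioo, ← intervalIntegral.integral_of_le hab,
      hac.integral_deriv_eq_sub]
  have hconst : ∀ r : ℝ, IntegrableOn (fun _ => r) (Ioo a b) :=
    fun _ => integrableOn_const measure_Ioo_lt_top.ne
  have hind : IntegrableOn (fun t => (1 - c) * G.indicator 1 t) (Ioo a b) :=
    ((hconst 1).indicator hG).const_mul _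
  calc g b - g a - c * (b - a) = (∫ t in Ioo a b, deriv g t) - c * (b - a) := by rw [hftc]
    _ ≤ (∫ t in Ioo a b, (c + (1 - c) * G.indicator 1 t)) - c * (b - a) :=
      sub_le_sub_right (setIntegral_mono_on
        (hac.intervalIntegrable_deriv.1.mono_set Ioo_subset_Ioc_self) ((hconst c).add hind)
        measurableSet_Ioo hbound) _
    _ = (1 - c) * volume.real G := by
      rw [integral_add (hconst c) hind, integral_const_mul, setIntegral_indicator hG,
        inter_eq_right.2 (sep_subset _ _)]
      simp only [Pi.one_apply, setIntegral_const, smul_eq_mul, mul_one,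
        Real.volume_real_Ioo_of_le hab]
      ring

theorem LipschitzOnWith.sub_sub_mul_le_measureReal_setOf_deriv_le (c : ℝ) (hab : a ≤ b)
    (hg : LipschitzOnWith 1 g (Icc a b)) :
    g a - g b - c * (b - a) ≤ (1 - c) * volume.real {t ∈ Ioo a b | deriv g t ≤ -c} := by
  have := hg.neg.sub_sub_mul_le_measureReal_setOf_le_deriv c hab
  simp only [deriv.neg', le_neg, Pi.neg_apply] at this
  linarith

end RealLipschitz

theorem exists_pos_forall_mul_abs_lt_of_tendsto_div_abs {u : ℝ → ℝ}
    (hu : Tendsto (fun s => u s / |s|) (𝓝[≠] 0) (𝓝 1)) {c : ℝ} (hc : c < 1) :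
    ∃ δ > 0, ∀ s : ℝ, s ≠ 0 → |s| < δ → c * |s| < u s := by
  have := hu.eventually (eventually_gt_nhds hc)
  rw [eventually_nhdsWithin_iff, Metric.eventually_nhds_iff] at this
  obtain ⟨δ, hδ, hδu⟩ := this
  exact ⟨δ, hδ, fun s hs hsδ =>
    (lt_div_iff₀ (abs_pos.2 hs)).1 (hδu (by rwa [Real.dist_0_eq_abs]) hs)⟩

theorem stmt14_general {X : Type*} [MetricSpace X]
    (x : ℕ → X) (hx : DenseRange x)
    (κ : X → lp (fun _ : ℕ => ℝ) ∞)
    (hκ : ∀ (z : X) (i : ℕ), (κ z : ℕ → ℝ) i = dist z (x i) - dist (x i) (x 0))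
    (l : ℝ)
    (γ : ℝ → lp (fun _ : ℕ => ℝ) ∞)
    (hrange : ∀ t ∈ Set.Icc 0 l, γ t ∈ Set.range κ)
    (hLip : LipschitzOnWith 1 γ (Set.Icc 0 l))
    (t₀ : ℝ) (ht₀ : t₀ ∈ Set.Ioo 0 l)
    (hspeed : Tendsto (fun h : ℝ => ‖γ (t₀ + h) - γ t₀‖ / |h|) (𝓝[≠] 0) (𝓝 1)) :
    ∃ h₀ > 0, ∀ h : ℝ, 0 < h → h < h₀ →
      ∃ Fp Fm : Set ℝ, Fp ⊆ Set.Ioo t₀ (t₀ + h) ∧ Fm ⊆ Set.Ioo (t₀ - h) t₀ ∧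
        ENNReal.ofReal (h / 8) ≤ volume Fp ∧ ENNReal.ofReal (h / 8) ≤ volume Fm ∧
        ∀ tp ∈ Fp, ∀ tm ∈ Fm, ∀ Dp Dm : lp (fun _ : ℕ => ℝ) ∞,
          IsWeakStarDerivAt γ tp Dp → IsWeakStarDerivAt γ tm Dm →
          (1 : ℝ) / 4 ≤ ‖Dp - Dm‖ := by
  obtain ⟨δ, hδ, hfast⟩ :=
    exists_pos_forall_mul_abs_lt_of_tendsto_div_abs hspeed (by norm_num : (3 / 4 : ℝ) < 1)
  refine ⟨min δ (min t₀ (l - t₀)), lt_min hδ (lt_min ht₀.1 (sub_pos.2 ht₀.2)),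
    fun h hh hh₀ => ?_⟩
  simp only [lt_min_iff] at hh₀
  obtain ⟨i, hi⟩ := exists_norm_sub_sub_le_apply_sub_of_kuratowski hx hκ
    (hrange t₀ ⟨ht₀.1.le, ht₀.2.le⟩) (by positivity : 0 < h / 2)
  set f : ℝ → ℝ := fun t => (γ t : ℕ → ℝ) i
  have hf : LipschitzOnWith 1 f (Icc 0 l) := (LipschitzOnWith.coordinate γ _ 1).1 hLip i
  have hinc : ∀ s, |s| = h → h / 4 ≤ f (t₀ + s) - f t₀ := fun s hs => by
    have hfar := hfast s (abs_pos.1 (hs ▸ hh)) (hs ▸ hh₀.1)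
    linarith [hi _ (hrange (t₀ + s) ⟨by linarith [neg_abs_le s], by linarith [le_abs_self s]⟩)]
  -- `1/7` works since `(h/4 - h/7) / (1 - 1/7) = h/8` and `2/7 ≥ 1/4`.
  refine ⟨{t ∈ Ioo t₀ (t₀ + h) | 1 / 7 ≤ deriv f t}, {t ∈ Ioo (t₀ - h) t₀ | deriv f t ≤ -(1 / 7)},
    sep_subset _ _, sep_subset _ _, ?_, ?_, ?_⟩
  · have hvol := LipschitzOnWith.sub_sub_mul_le_measureReal_setOf_le_deriv (b := t₀ + h)
      (1 / 7) (by linarith) (hf.mono (Icc_subset_Icc ht₀.1.le (by linarith)))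
    have := hinc h (abs_of_pos hh)
    exact ENNReal.ofReal_le_of_le_toReal (by rw [← measureReal_def]; linarith)
  · have hvol := LipschitzOnWith.sub_sub_mul_le_measureReal_setOf_deriv_le (a := t₀ - h)
      (1 / 7) (by linarith) (hf.mono (Icc_subset_Icc (by linarith) ht₀.2.le))
    have := hinc (-h) (by rw [abs_neg, abs_of_pos hh])
    rw [← sub_eq_add_neg] at this
    exact ENNReal.ofReal_le_of_le_toReal (by rw [← measureReal_def]; linarith)
  · rintro tp ⟨-, hp⟩ tm ⟨-, hm⟩ Dp Dm hDp hDm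
    linarith [le_abs_self (deriv f tp - deriv f tm), hDp.abs_deriv_apply_sub_le_norm_sub hDm i]

/-- A unit-speed curve in the Kuratowski image of a complete separable metric space has
a weak* derivative that is not approximately continuous at any point of metric speed 1:
nearby derivatives split into two sets of definite measure lying at distance ≥ 1/4. -/
theorem stmt14 {X : Type*} [MetricSpace X] [CompleteSpace X]
    (x : ℕ → X) (hx : DenseRange x)
    (κ : X → lp (fun _ : ℕ => ℝ) ∞)
    (hκ : ∀ (z : X) (i : ℕ), (κ z : ℕ → ℝ) i = dist z (x i) - dist (x i) (x 0))
    (l : ℝ) (hl : 0 < l)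
    (γ : ℝ → lp (fun _ : ℕ => ℝ) ∞)
    (hrange : ∀ t ∈ Set.Icc 0 l, γ t ∈ Set.range κ)
    (hLip : LipschitzOnWith 1 γ (Set.Icc 0 l))
    (t₀ : ℝ) (ht₀ : t₀ ∈ Set.Ioo 0 l)
    (D : lp (fun _ : ℕ => ℝ) ∞) (hD : IsWeakStarDerivAt γ t₀ D)
    (hspeed : Tendsto (fun h : ℝ => ‖γ (t₀ + h) - γ t₀‖ / |h|) (𝓝[≠] 0) (𝓝 1)) :
    ∃ h₀ > 0, ∀ h : ℝ, 0 < h → h < h₀ →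
      ∃ Fp Fm : Set ℝ, Fp ⊆ Set.Ioo t₀ (t₀ + h) ∧ Fm ⊆ Set.Ioo (t₀ - h) t₀ ∧
        ENNReal.ofReal (h / 8) ≤ volume Fp ∧ ENNReal.ofReal (h / 8) ≤ volume Fm ∧
        ∀ tp ∈ Fp, ∀ tm ∈ Fm, ∀ Dp Dm : lp (fun _ : ℕ => ℝ) ∞,
          IsWeakStarDerivAt γ tp Dp → IsWeakStarDerivAt γ tm Dm →
          (1 : ℝ) / 4 ≤ ‖Dp - Dm‖ :=
  stmt14_general x hx κ hκ l γ hrange hLip t₀ ht₀ hspeed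
end

section
/- Let f : E → V be an essentially separably valued function from a Lebesgue measurable set E ⊆ ℝⁿ to a Banach space V. Then f is (Lebesgue–Borel) measurable if and only if f is approximately continuous at almost every x ∈ E, where approximate continuity at x means that for every ε > 0, the Lebesgue density at x of the set {y ∈ E : ‖f(y) − f(x)‖ ≥ ε} is zero. -/
open MeasureTheory Set Filter Topology ENNReal

/-!
If `f` is a.e. equal to a measurable `g` with values near a countable set, then for a centre `v`
of that set and a small radius `δ` the measurable set `A = E ∩ g⁻¹' (ball v δ)` has density one at
almost all of its points (Lebesgue's density theorem); at such a point `x ∈ E` the set of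
`y ∈ E` with `‖f y - f x‖ ≥ 2δ` misses `A` up to a null set, so it has density zero.

Conversely, approximate continuity makes `S = {y ∈ E | ‖f y - v‖ ≤ ρ}` have density zero at almost
every point of `E \ S`, while a measurable hull of `S` has density one at almost all of its points;
so the hull differs from `S` by a null set and `S` is null measurable. Picking for each `x` the
first point of a dense sequence that is `ε`-close to `f x` then gives measurable uniform
approximations of `f`.
-/

open Metric

section Density

variable {X : Type*} [PseudoMetricSpace X] [MeasurableSpace X]

def HasDensityZeroAt (μ : Measure X) (s : Set X) (x : X) : Prop :=
  Tendsto (fun r : ℝ => μ (s ∩ ball x r) / μ (ball x r)) (𝓝[>] 0) (𝓝 0)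

def ApproxContinuousWithinAt {Y : Type*} [PseudoMetricSpace Y] (μ : Measure X) (f : X → Y)
    (E : Set X) (x : X) : Prop :=
  ∀ ε > 0, HasDensityZeroAt μ {y ∈ E | ε ≤ dist (f y) (f x)} x

variable {μ : Measure X} {s t : Set X} {x : X}

theorem HasDensityZeroAt.mono_ae (ht : HasDensityZeroAt μ t x) (hst : s ≤ᵐ[μ] t) :
    HasDensityZeroAt μ s x :=
  tendsto_of_tendsto_of_tendsto_of_le_of_le tendsto_const_nhds ht (fun _ => zero_le)
    fun _ => ENNReal.div_le_div_right (measure_mono_ae (hst.inter EventuallyLE.rfl)) _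

theorem HasDensityZeroAt.mono (ht : HasDensityZeroAt μ t x) (hst : s ⊆ t) :
    HasDensityZeroAt μ s x :=
  ht.mono_ae hst.eventuallyLE

theorem ApproxContinuousWithinAt.congr_ae {Y : Type*} [PseudoMetricSpace Y] {f g : X → Y}
    {E : Set X} (hg : ApproxContinuousWithinAt μ g E x) (hfg : ∀ᵐ y ∂μ, y ∈ E → f y = g y)
    (hx : f x = g x) : ApproxContinuousWithinAt μ f E x := by
  intro ε hε
  refine (hg ε hε).mono_ae ?_
  filter_upwards [hfg] with y hy
  rintro ⟨hyE, hyε⟩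
  exact ⟨hyE, by rwa [← hy hyE, ← hx]⟩

end Density

theorem aemeasurable_of_nullMeasurableSet_dist_le {α β : Type*} [MeasurableSpace α]
    [PseudoMetricSpace β] [MeasurableSpace β] [BorelSpace β] {μ : Measure α} {f : α → β}
    {t : Set β} (ht : TopologicalSpace.IsSeparable t) (hft : ∀ᵐ x ∂μ, f x ∈ t)
    (hf : ∀ v ρ, NullMeasurableSet {x | dist (f x) v ≤ ρ} μ) : AEMeasurable f μ := by
  classical
  rcases t.eq_empty_or_nonempty with rfl | htne
  · obtain rfl : μ = 0 := by simpa using hft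
    exact aemeasurable_zero_measure
  obtain ⟨c, hc, htc⟩ := ht
  obtain ⟨e, rfl⟩ := hc.exists_eq_range ((htne.mono htc).of_closure)
  refine aemeasurable_of_unif_approx fun ε hε => ?_
  set M : ℕ → Set α := fun k => toMeasurable μ {x | dist (f x) (e k) ≤ ε}
  -- the second disjunct only makes `Nat.find` below defined everywhere
  have hex : ∀ x, ∃ k, x ∈ M k ∨ x ∉ ⋃ j, M j := fun x =>
    (em (x ∈ ⋃ j, M j)).elim (fun hx => (mem_iUnion.1 hx).imp fun _ => Or.inl)
      fun hx => ⟨0, Or.inr hx⟩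
  have hfirst : Measurable fun x => Nat.find (hex x) :=
    measurable_find hex fun k => (measurableSet_toMeasurable _ _).union
      (MeasurableSet.iUnion fun j => measurableSet_toMeasurable _ _).compl
  refine ⟨fun x => e (Nat.find (hex x)), (measurable_from_nat.comp hfirst).aemeasurable, ?_⟩
  filter_upwards [hft, ae_all_iff.2 fun k => (hf (e k) ε).toMeasurable_ae_eq.le] with x hxt hxM
  obtain ⟨k, hk⟩ := mem_closure_range_iff.1 (htc hxt) ε hε
  have hxk : x ∈ M k := subset_toMeasurable _ _ hk.le
  rcases Nat.find_spec (hex x) with hx | hnone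
  · rw [dist_comm]
    exact hxM _ hx
  · exact absurd (mem_iUnion.2 ⟨k, hxk⟩) hnone

section Lebesgue

variable {X : Type*} [NormedAddCommGroup X] [NormedSpace ℝ X] [FiniteDimensional ℝ X]
  [MeasurableSpace X] [BorelSpace X] (μ : Measure X) [μ.IsAddHaarMeasure]

theorem ae_tendsto_measure_inter_ball_div {s : Set X} (hs : MeasurableSet s) :
    ∀ᵐ x ∂μ, Tendsto (fun r : ℝ => μ (s ∩ ball x r) / μ (ball x r)) (𝓝[>] 0)
      (𝓝 (s.indicator 1 x)) := by
  filter_upwards [Besicovitch.ae_tendsto_measure_inter_div_of_measurableSet μ hs] with x hx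
  refine hx.congr' ?_
  filter_upwards [self_mem_nhdsWithin] with r hr
  have hball : closedBall x r =ᵐ[μ] ball x r := by
    rw [← ball_union_sphere]
    exact union_ae_eq_left_of_ae_eq_empty
      (ae_eq_empty.2 (Measure.addHaar_sphere_of_ne_zero μ x (ne_of_gt hr)))
  rw [measure_congr hball, measure_congr ((EventuallyEq.refl _ s).inter hball)]

theorem MeasurableSet.ae_hasDensityZeroAt_of_notMem {s : Set X} (hs : MeasurableSet s) :
    ∀ᵐ x ∂μ, x ∉ s → HasDensityZeroAt μ s x := by
  filter_upwards [ae_tendsto_measure_inter_ball_div μ hs] with x hx hxs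
  rwa [indicator_of_notMem hxs] at hx

theorem nullMeasurableSet_of_ae_hasDensityZeroAt {s : Set X}
    (h : ∀ᵐ x ∂μ, x ∉ s → HasDensityZeroAt μ s x) : NullMeasurableSet s μ := by
  set M := toMeasurable μ s
  have hM : MeasurableSet M := measurableSet_toMeasurable μ s
  refine hM.nullMeasurableSet.congr (eventuallyEq_set.2 ?_)
  filter_upwards [h, ae_tendsto_measure_inter_ball_div μ hM] with x hxs hxM
  refine ⟨fun hx => by_contra fun hxs' => ?_, fun hx => subset_toMeasurable μ s hx⟩
  have hzero : HasDensityZeroAt μ M x := by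
    refine (hxs hxs').congr fun r => ?_
    rw [Measure.measure_toMeasurable_inter_of_sFinite measurableSet_ball]
  rw [indicator_of_mem hx] at hxM
  exact one_ne_zero (tendsto_nhds_unique hxM hzero)

end Lebesgue

section Federer

variable {X : Type*} [NormedAddCommGroup X] [NormedSpace ℝ X] [FiniteDimensional ℝ X]
  [MeasurableSpace X] [BorelSpace X] (μ : Measure X) [μ.IsAddHaarMeasure]
  {Y : Type*} [PseudoMetricSpace Y] [MeasurableSpace Y] {E : Set X} {t : Set Y}

theorem Measurable.ae_approxContinuousWithinAt [OpensMeasurableSpace Y] {g : X → Y}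
    (hg : Measurable g) (hE : MeasurableSet E) (ht : TopologicalSpace.IsSeparable t)
    (hgt : ∀ᵐ x ∂μ.restrict E, g x ∈ t) :
    ∀ᵐ x ∂μ.restrict E, ApproxContinuousWithinAt μ g E x := by
  obtain ⟨c, hc, htc⟩ := ht
  set A : Y → ℕ → Set X := fun v m => E ∩ g ⁻¹' ball v (1 / (m + 1))
  have hdens : ∀ᵐ x ∂μ, ∀ v ∈ c, ∀ m : ℕ, x ∈ A v m → HasDensityZeroAt μ (A v m)ᶜ x :=
    (ae_ball_iff hc).2 fun v _ => ae_all_iff.2 fun m => by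
      filter_upwards [(hE.inter (hg measurableSet_ball)).compl.ae_hasDensityZeroAt_of_notMem μ]
        with x hx hxA using hx (not_not_intro hxA)
  filter_upwards [ae_restrict_mem hE, hgt, ae_restrict_of_ae hdens] with x hxE hxt hx ε hε
  obtain ⟨m, hm⟩ := exists_nat_one_div_lt (half_pos hε)
  obtain ⟨v, hvc, hv⟩ := mem_closure_iff.1 (htc hxt) _ (Nat.one_div_pos_of_nat (n := m))
  refine (hx v hvc m ⟨hxE, hv⟩).mono fun y ⟨_, hyε⟩ hyA => hyε.not_gt ?_
  linarith [dist_triangle_right (g y) (g x) v, mem_ball.1 hyA.2]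

theorem AEMeasurable.ae_approxContinuousWithinAt [OpensMeasurableSpace Y] {f : X → Y}
    (hf : AEMeasurable f (μ.restrict E)) (hE : MeasurableSet E)
    (ht : TopologicalSpace.IsSeparable t) (hft : ∀ᵐ x ∂μ.restrict E, f x ∈ t) :
    ∀ᵐ x ∂μ.restrict E, ApproxContinuousWithinAt μ f E x := by
  have hfg := hf.ae_eq_mk
  have hgt : ∀ᵐ x ∂μ.restrict E, hf.mk f x ∈ t := by
    filter_upwards [hft, hfg] with x hx hx' using hx' ▸ hx
  filter_upwards [hf.measurable_mk.ae_approxContinuousWithinAt μ hE ht hgt, hfg] with x hx hx'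
  exact hx.congr_ae ((ae_restrict_iff' hE).1 hfg) hx'

theorem aemeasurable_of_ae_approxContinuousWithinAt [BorelSpace Y] {f : X → Y}
    (hE : MeasurableSet E) (ht : TopologicalSpace.IsSeparable t)
    (hft : ∀ᵐ x ∂μ.restrict E, f x ∈ t)
    (hf : ∀ᵐ x ∂μ.restrict E, ApproxContinuousWithinAt μ f E x) :
    AEMeasurable f (μ.restrict E) := by
  refine aemeasurable_of_nullMeasurableSet_dist_le ht hft fun v ρ => ?_
  rw [nullMeasurableSet_restrict hE.nullMeasurableSet]
  refine nullMeasurableSet_of_ae_hasDensityZeroAt μ ?_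
  filter_upwards [ae_imp_of_ae_restrict hf, hE.ae_hasDensityZeroAt_of_notMem μ]
    with x hxf hxE hxS
  by_cases hx : x ∈ E
  · have hρ : ρ < dist (f x) v := lt_of_not_ge fun h => hxS ⟨h, hx⟩
    refine (hxf hx _ (sub_pos.2 hρ)).mono fun y ⟨hyv, hyE⟩ => ⟨hyE, ?_⟩
    have hyv : dist (f y) v ≤ ρ := hyv
    linarith [dist_triangle_left (f x) v (f y), dist_comm (f y) (f x)]
  · exact (hxE hx).mono inter_subset_right

end Federer

theorem stmt17_general {n : ℕ} (E : Set (Fin n → ℝ)) (hE : MeasurableSet E)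
    {V : Type*} [NormedAddCommGroup V] [MeasurableSpace V] [BorelSpace V]
    (f : (Fin n → ℝ) → V)
    (hsep : ∃ N : Set (Fin n → ℝ), volume N = 0 ∧
      TopologicalSpace.IsSeparable (f '' (E \ N))) :
    AEMeasurable f (volume.restrict E) ↔
      ∀ᵐ x ∂(volume.restrict E), ∀ ε > (0 : ℝ),
        Tendsto (fun r : ℝ =>
            volume ({y ∈ E | ε ≤ ‖f y - f x‖} ∩ Metric.ball x r) /
              volume (Metric.ball x r))
          (𝓝[>] 0) (𝓝 0) := by
  obtain ⟨N, hN, hsep⟩ := hsep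
  have hft : ∀ᵐ x ∂volume.restrict E, f x ∈ f '' (E \ N) := by
    filter_upwards [ae_restrict_mem hE, ae_restrict_of_ae (measure_eq_zero_iff_ae_notMem.1 hN)]
      with x hxE hxN using mem_image_of_mem f ⟨hxE, hxN⟩
  simp only [← dist_eq_norm]
  exact ⟨fun hf => hf.ae_approxContinuousWithinAt volume hE hsep hft,
    aemeasurable_of_ae_approxContinuousWithinAt volume hE hsep hft⟩

/-- Federer's characterization: an essentially separably valued function into a Banach
space is measurable if and only if it is approximately continuous almost everywhere. -/
theorem stmt17 {n : ℕ} (E : Set (Fin n → ℝ)) (hE : MeasurableSet E)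
    {V : Type*} [NormedAddCommGroup V] [NormedSpace ℝ V] [CompleteSpace V] [MeasurableSpace V] [BorelSpace V]
    (f : (Fin n → ℝ) → V)
    (hsep : ∃ N : Set (Fin n → ℝ), volume N = 0 ∧
      TopologicalSpace.IsSeparable (f '' (E \ N))) :
    AEMeasurable f (volume.restrict E) ↔
      ∀ᵐ x ∂(volume.restrict E), ∀ ε > (0 : ℝ),
        Tendsto (fun r : ℝ =>
            volume ({y ∈ E | ε ≤ ‖f y - f x‖} ∩ Metric.ball x r) /
              volume (Metric.ball x r))
          (𝓝[>] 0) (𝓝 0) :=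
  stmt17_general E hE f hsep
end

section
/- Let γ : [a,b] → V be a Lipschitz curve in a Banach space, s_γ its length function, and A ⊆ [a,b] a measurable set. Then ℒ¹(s_γ(A)) ≤ ∫_A s_γ'(t) dt, with equality when s_γ is absolutely continuous (in particular when γ is Lipschitz). Consequently, if N ⊆ [a,b] is a null set then s_γ(N ∪ {t : s_γ'(t) = 0}) is a Lebesgue-null subset of [0, l(γ)]. -/
open MeasureTheory Set Filter Topology ENNReal

/-!
The length function `s_γ = arcLength γ a` of a `K`-Lipschitz curve is monotone and
`K`-Lipschitz, since `s_γ y - s_γ x` is the variation of `γ` on `[x, y]`. For a monotone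
Lipschitz `f` on `[a, b]`, Rademacher's theorem gives a full-measure subset `D` of `A` on which
`f` is differentiable with `0 ≤ f' ≤ K`; the image of the null set `A \ D` is null because `f` is
Lipschitz, and on `D` the one-dimensional change of variables for monotone maps gives
`|f(D)| = ∫_D f'`.
-/

theorem LipschitzOnWith.volume_image_eq_zero {K : NNReal} {f : ℝ → ℝ} {s N : Set ℝ}
    (hf : LipschitzOnWith K f s) (hN : N ⊆ s) (hN0 : volume N = 0) :
    volume (f '' N) = 0 := by
  have h := (hf.mono hN).hausdorffMeasure_image_le zero_le_one
  rw [hausdorffMeasure_real, hN0, mul_zero] at h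
  exact nonpos_iff_eq_zero.1 h

theorem MonotoneOn.deriv_mem_Icc {K : NNReal} {f : ℝ → ℝ} {s : Set ℝ} {x : ℝ}
    (hmono : MonotoneOn f s) (hlip : LipschitzOnWith K f s) (hs : s ∈ 𝓝 x) :
    deriv f x ∈ Icc 0 (K : ℝ) :=
  ⟨by rw [← derivWithin_of_mem_nhds hs]; exact hmono.derivWithin_nonneg,
    (Real.le_norm_self _).trans (norm_deriv_le_of_lipschitzOn hs hlip)⟩

theorem MonotoneOn.volume_image_eq_ofReal_integral_deriv {K : NNReal} {f : ℝ → ℝ} {a b : ℝ}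
    (hmono : MonotoneOn f (Icc a b)) (hlip : LipschitzOnWith K f (Icc a b))
    {A : Set ℝ} (hA : A ⊆ Icc a b) (hAm : MeasurableSet A) :
    volume (f '' A) = ENNReal.ofReal (∫ t in A, deriv f t) := by
  have hgood : ∀ᵐ x, x ∈ Icc a b → DifferentiableAt ℝ f x ∧ deriv f x ∈ Icc 0 (K : ℝ) := by
    filter_upwards [hlip.ae_differentiableWithinAt_of_mem_real, Ioo_ae_eq_Icc.mem_iff]
      with x hdiff hIoo hx
    have hnhds : Icc a b ∈ 𝓝 x := Icc_mem_nhds (hIoo.2 hx).1 (hIoo.2 hx).2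
    exact ⟨(hdiff hx).differentiableAt hnhds, hmono.deriv_mem_Icc hlip hnhds⟩
  set D := A ∩ {x | DifferentiableAt ℝ f x}
  have hDA : D ⊆ A := inter_subset_left
  have hDm : MeasurableSet D := hAm.inter (measurableSet_of_differentiableAt ℝ f)
  have hAD : volume (A \ D) = 0 := by
    refine measure_mono_null (fun x hx => ?_) (ae_iff.1 hgood)
    exact fun hgood_x => hx.2 ⟨hx.1, (hgood_x (hA hx.1)).1⟩
  have hD_ae : D =ᵐ[volume] A := by
    simpa only [sdiff_sdiff_cancel_left hDA] using sdiff_null_ae_eq_self (s := A) hAD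
  have himage : volume (f '' A) = volume (f '' D) := by
    rw [← union_sdiff_cancel hDA, image_union]
    exact measure_congr (union_ae_eq_left_of_ae_eq_empty
      (ae_eq_empty.2 (hlip.volume_image_eq_zero (sdiff_subset.trans hA) hAD)))
  have hbound : ∀ᵐ x ∂volume.restrict A, deriv f x ∈ Icc 0 (K : ℝ) := by
    filter_upwards [ae_restrict_of_ae hgood, ae_restrict_mem hAm] with x hx hxA
    exact (hx (hA hxA)).2
  have hint : IntegrableOn (deriv f) A :=
    IntegrableOn.of_bound ((measure_mono hA).trans_lt measure_Icc_lt_top)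
      (measurable_deriv f).aestronglyMeasurable K
      (hbound.mono fun x hx => by rw [Real.norm_of_nonneg hx.1]; exact hx.2)
  calc volume (f '' A) = volume (f '' D) := himage
    _ = ∫⁻ x in D, ENNReal.ofReal (deriv f x) :=
      (lintegral_deriv_eq_volume_image_of_monotoneOn hDm
        (fun x hx => hx.2.hasDerivAt.hasDerivWithinAt) (hmono.mono (hDA.trans hA))).symm
    _ = ∫⁻ x in A, ENNReal.ofReal (deriv f x) := setLIntegral_congr hD_ae
    _ = ENNReal.ofReal (∫ x in A, deriv f x) :=
      (ofReal_integral_eq_lintegral_ofReal hint (hbound.mono fun x hx => hx.1)).symm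

section ArcLength

variable {E : Type*} [PseudoEMetricSpace E] {γ : ℝ → E} {K : NNReal} {a b : ℝ}

noncomputable def arcLength (γ : ℝ → E) (a t : ℝ) : ℝ :=
  (eVariationOn γ (Icc a t)).toReal

theorem LipschitzOnWith.eVariationOn_Icc_le {s : Set ℝ} (hγ : LipschitzOnWith K γ s)
    {x y : ℝ} (hxy : Icc x y ⊆ s) :
    eVariationOn γ (Icc x y) ≤ K * ENNReal.ofReal (y - x) := by
  have hid : eVariationOn id (Icc x y) = ENNReal.ofReal (y - x) := by
    rw [← univ_inter (Icc x y)]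
    exact (monotone_id.monotoneOn univ).eVariationOn_eq (mem_univ x) (mem_univ y)
  simpa [hid] using hγ.comp_eVariationOn_le (g := id) hxy

theorem LipschitzOnWith.boundedVariationOn (hγ : LipschitzOnWith K γ (Icc a b)) :
    BoundedVariationOn γ (Icc a b) :=
  ne_top_of_le_ne_top (by finiteness) (hγ.eVariationOn_Icc_le subset_rfl)

theorem arcLength_sub_arcLength {x y : ℝ} (hax : a ≤ x) (hxy : x ≤ y)
    (hfin : eVariationOn γ (Icc a y) ≠ ⊤) :
    arcLength γ a y - arcLength γ a x = (eVariationOn γ (Icc x y)).toReal := by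
  have hadd : eVariationOn γ (Icc a x) + eVariationOn γ (Icc x y) = eVariationOn γ (Icc a y) := by
    simpa using eVariationOn.Icc_add_Icc γ hax hxy (mem_univ x)
  obtain ⟨hfin_ax, hfin_xy⟩ := ENNReal.add_ne_top.1 (hadd ▸ hfin)
  rw [arcLength, arcLength, ← hadd, toReal_add hfin_ax hfin_xy, add_sub_cancel_left]

theorem BoundedVariationOn.monotoneOn_arcLength (hγ : BoundedVariationOn γ (Icc a b)) :
    MonotoneOn (arcLength γ a) (Icc a b) := fun _ _ _ hy hxy =>
  toReal_mono (ne_top_of_le_ne_top hγ (eVariationOn.mono γ (Icc_subset_Icc_right hy.2)))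
    (eVariationOn.mono γ (Icc_subset_Icc_right hxy))

theorem LipschitzOnWith.arcLength (hγ : LipschitzOnWith K γ (Icc a b)) :
    LipschitzOnWith K (arcLength γ a) (Icc a b) := by
  refine LipschitzOnWith.of_le_add_mul K fun x hx y hy => ?_
  rcases le_total x y with hxy | hyx
  · exact le_add_of_le_of_nonneg (hγ.boundedVariationOn.monotoneOn_arcLength hx hy hxy)
      (by positivity)
  · have hvar : (eVariationOn γ (Icc y x)).toReal ≤ K * (x - y) := by
      simpa [toReal_ofReal (sub_nonneg.2 hyx)] using
        toReal_mono (by finiteness) (hγ.eVariationOn_Icc_le (Icc_subset_Icc hy.1 hx.2))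
    have hfin := ne_top_of_le_ne_top hγ.boundedVariationOn
      (eVariationOn.mono γ (Icc_subset_Icc_right hx.2))
    rw [Real.dist_eq, abs_of_nonneg (sub_nonneg.2 hyx)]
    linarith [arcLength_sub_arcLength hy.1 hyx hfin]

end ArcLength

theorem stmt19_general {V : Type*} [NormedAddCommGroup V]
    (a b : ℝ) (K : NNReal) (γ : ℝ → V)
    (hγ : LipschitzOnWith K γ (Set.Icc a b)) :
    (∀ A : Set ℝ, A ⊆ Set.Icc a b → MeasurableSet A →
      volume ((fun t => (eVariationOn γ (Set.Icc a t)).toReal) '' A) =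
        ENNReal.ofReal
          (∫ t in A, deriv (fun u => (eVariationOn γ (Set.Icc a u)).toReal) t)) ∧
    ∀ N : Set ℝ, N ⊆ Set.Icc a b → volume N = 0 →
      volume ((fun t => (eVariationOn γ (Set.Icc a t)).toReal) ''
        (N ∪ {t ∈ Set.Icc a b |
          deriv (fun u => (eVariationOn γ (Set.Icc a u)).toReal) t = 0})) = 0 := by
  have hmono := hγ.boundedVariationOn.monotoneOn_arcLength
  have hlip := hγ.arcLength
  have harea := fun A (hA : A ⊆ Icc a b) hAm =>
    hmono.volume_image_eq_ofReal_integral_deriv hlip hA hAm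
  refine ⟨harea, fun N hN hN0 => ?_⟩
  have hZm : MeasurableSet {t ∈ Icc a b | deriv (arcLength γ a) t = 0} :=
    measurableSet_Icc.inter (measurable_deriv _ (measurableSet_singleton 0))
  rw [image_union]
  refine measure_union_null (hlip.volume_image_eq_zero hN hN0) ?_
  have hZ := harea _ (sep_subset _ _) hZm
  rw [setIntegral_congr_fun hZm fun t ht => ht.2, integral_zero, ENNReal.ofReal_zero] at hZ
  exact hZ

/-- Area formula for the length function of a Lipschitz curve: for every measurable
`A ⊆ [a,b]`, the measure of `s_γ(A)` equals the integral of `s_γ'` over `A`; in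
particular the image under `s_γ` of the union of a null set with `{s_γ' = 0}` is null. -/
theorem stmt19 {V : Type*} [NormedAddCommGroup V] [NormedSpace ℝ V] [CompleteSpace V]
    (a b : ℝ) (hab : a ≤ b) (K : NNReal) (γ : ℝ → V)
    (hγ : LipschitzOnWith K γ (Set.Icc a b)) :
    (∀ A : Set ℝ, A ⊆ Set.Icc a b → MeasurableSet A →
      volume ((fun t => (eVariationOn γ (Set.Icc a t)).toReal) '' A) =
        ENNReal.ofReal
          (∫ t in A, deriv (fun u => (eVariationOn γ (Set.Icc a u)).toReal) t)) ∧
    ∀ N : Set ℝ, N ⊆ Set.Icc a b → volume N = 0 →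
      volume ((fun t => (eVariationOn γ (Set.Icc a t)).toReal) ''
        (N ∪ {t ∈ Set.Icc a b |
          deriv (fun u => (eVariationOn γ (Set.Icc a u)).toReal) t = 0})) = 0 :=
  stmt19_general a b K γ hγ
end
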